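/- arXiv:1810.13045 — 2 statements merged into one kernel-verified Lean document; each statement's English description precedes it below -/
import Mathlib

section
/- Define p : [0,2π] → [2,3] by p(θ) = 3 for θ ∈ [0,π/3] ∪ [5π/3,2π], p(θ) = cos θ + 5/2 for θ ∈ (π/3,2π/3) ∪ (4π/3,5π/3), and p(θ) = 2 for θ ∈ [2π/3,4π/3]. Let 2 < q ≤ 3 and ε > 0 satisfy 1/q + ε < 1/2. Then sup_{0≤r<1} ∫₀^{2π} |1 + re^{iθ}|^{−(1/q+ε)·p(θ)} dθ < ∞; i.e., the analytic function f(z) = (1+z)^{−1/q−ε} belongs to the variable exponent Hardy space H^{p(·)}(𝔻). -/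
open MeasureTheory Complex
open scoped ENNReal

/-- The example exponent: `p(θ) = 3` on `[0,π/3] ∪ [5π/3,2π]`,
`p(θ) = cos θ + 5/2` on `(π/3,2π/3) ∪ (4π/3,5π/3)`, and `p(θ) = 2` on `[2π/3,4π/3]`. -/
noncomputable def pEx (θ : ℝ) : ℝ :=
  if θ ≤ Real.pi/3 then 3
  else if θ < 2*Real.pi/3 then Real.cos θ + 5/2
  else if θ ≤ 4*Real.pi/3 then 2
  else if θ < 5*Real.pi/3 then Real.cos θ + 5/2
  else 3

/-!
Away from `[2π/3, 4π/3]` we have `cos θ ≥ -1/2`, so `|1 + r e^{iθ}| ≥ 1 + r cos θ ≥ 1/2` and the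
integrand is at most `2^{(1/q+ε) p(θ)} ≤ 4`. On `[2π/3, 4π/3]` the exponent is `p = 2`, and
`|1 + r e^{iθ}| = |e^{-iθ} + r| ≥ |sin θ| ≥ (2/π) |θ - π|` by Jordan's inequality, so the integrand
is dominated by a multiple of `|θ - π|^{-2(1/q+ε)}`, integrable since `2(1/q+ε) < 1`. The
majorant does not depend on `r`.
-/

lemma abs_sin_le_norm_one_add_mul_exp (r θ : ℝ) :
    |Real.sin θ| ≤ ‖1 + (r : ℂ) * exp (θ * I)‖ := by
  have hfactor : 1 + (r : ℂ) * exp (θ * I) = exp (θ * I) * (exp ((-θ : ℝ) * I) + r) := by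
    rw [mul_add, ← Complex.exp_add, ofReal_neg, neg_mul, add_neg_cancel, exp_zero, mul_comm]
  calc |Real.sin θ| = |(exp ((-θ : ℝ) * I) + r).im| := by
        rw [add_im, exp_ofReal_mul_I_im, ofReal_im, add_zero, Real.sin_neg, abs_neg]
    _ ≤ ‖exp ((-θ : ℝ) * I) + r‖ := abs_im_le_norm _
    _ = ‖1 + (r : ℂ) * exp (θ * I)‖ := by rw [hfactor, norm_mul, norm_exp_ofReal_mul_I, one_mul]

lemma one_add_mul_cos_le_norm_one_add_mul_exp (r θ : ℝ) :
    1 + r * Real.cos θ ≤ ‖1 + (r : ℂ) * exp (θ * I)‖ := by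
  simpa [exp_ofReal_mul_I_re] using re_le_norm (1 + (r : ℂ) * exp (θ * I))

lemma two_div_pi_mul_abs_sub_pi_le_abs_sin {θ : ℝ} (h : |θ - Real.pi| ≤ Real.pi / 2) :
    2 / Real.pi * |θ - Real.pi| ≤ |Real.sin θ| := by
  have hsin : |Real.sin θ| = Real.sin |θ - Real.pi| := by
    rw [← Real.abs_sin_eq_sin_abs_of_abs_le_pi (by linarith [Real.pi_pos]), Real.sin_sub_pi,
      abs_neg]
  exact hsin ▸ Real.mul_le_sin (abs_nonneg _) h

lemma neg_one_half_le_cos_of_notMem_Icc {θ : ℝ} (hθ : θ ∈ Set.Icc 0 (2 * Real.pi))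
    (hmid : θ ∉ Set.Icc (2 * Real.pi / 3) (4 * Real.pi / 3)) : -(1 / 2) ≤ Real.cos θ := by
  have hpi := Real.pi_pos
  have hcos : Real.cos (2 * Real.pi / 3) = -(1 / 2) := by
    rw [show 2 * Real.pi / 3 = Real.pi - Real.pi / 3 by ring, Real.cos_pi_sub,
      Real.cos_pi_div_three]
  rw [Set.mem_Icc, not_and_or, not_le, not_le] at hmid
  rcases hmid with h | h
  · exact hcos ▸ Real.cos_le_cos_of_nonneg_of_le_pi hθ.1 (by linarith) h.le
  · rw [← Real.cos_two_pi_sub, ← hcos]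
    exact Real.cos_le_cos_of_nonneg_of_le_pi (by linarith [hθ.2]) (by linarith) (by linarith)

lemma pEx_nonneg (θ : ℝ) : 0 ≤ pEx θ := by
  have := Real.neg_one_le_cos θ
  unfold pEx
  split_ifs <;> linarith

lemma pEx_le_four (θ : ℝ) : pEx θ ≤ 4 := by
  have := Real.cos_le_one θ
  unfold pEx
  split_ifs <;> linarith

lemma pEx_eq_two {θ : ℝ} (h : θ ∈ Set.Icc (2 * Real.pi / 3) (4 * Real.pi / 3)) : pEx θ = 2 := by
  have := Real.pi_pos
  unfold pEx
  rw [if_neg (by linarith [h.1]), if_neg (by linarith [h.1]), if_pos h.2]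

lemma intervalIntegrable_abs_rpow {t : ℝ} (ht : -1 < t) (a b : ℝ) :
    IntervalIntegrable (fun x : ℝ => |x| ^ t) volume a b := by
  have hpos : ∀ c : ℝ, 0 ≤ c → IntervalIntegrable (fun x : ℝ => |x| ^ t) volume 0 c := by
    intro c hc
    refine (intervalIntegral.intervalIntegrable_rpow' ht).congr fun x hx => ?_
    rw [Set.uIoc_of_le hc] at hx
    simp only [abs_of_pos hx.1]
  have hall : ∀ c : ℝ, IntervalIntegrable (fun x : ℝ => |x| ^ t) volume 0 c := by
    intro c
    rcases le_total 0 c with hc | hc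
    · exact hpos c hc
    · simpa using (hpos (-c) (by linarith)).comp_sub_left 0
  exact (hall a).symm.trans (hall b)

lemma intervalIntegrable_abs_sub_rpow {t : ℝ} (ht : -1 < t) (c a b : ℝ) :
    IntervalIntegrable (fun x : ℝ => |x - c| ^ t) volume a b := by
  simpa using (intervalIntegrable_abs_rpow ht (a - c) (b - c)).comp_sub_right c

lemma norm_one_add_mul_exp_rpow_le {α r θ : ℝ} (hα0 : 0 ≤ α) (hα : α ≤ 1 / 2)
    (hr0 : 0 ≤ r) (hr1 : r ≤ 1) (hθ : θ ∈ Set.Icc 0 (2 * Real.pi)) (hθπ : θ ≠ Real.pi) :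
    ‖1 + (r : ℂ) * exp (θ * I)‖ ^ (-(α * pEx θ))
      ≤ 4 + (2 / Real.pi) ^ (-(2 * α)) * |θ - Real.pi| ^ (-(2 * α)) := by
  have hpi := Real.pi_pos
  by_cases hmid : θ ∈ Set.Icc (2 * Real.pi / 3) (4 * Real.pi / 3)
  · have hdist : |θ - Real.pi| ≤ Real.pi / 2 :=
      abs_sub_le_iff.2 ⟨by linarith [hmid.2], by linarith [hmid.1]⟩
    have hpos : 0 < 2 / Real.pi * |θ - Real.pi| := by positivity [sub_ne_zero.2 hθπ]
    have hle : 2 / Real.pi * |θ - Real.pi| ≤ ‖1 + (r : ℂ) * exp (θ * I)‖ :=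
      (two_div_pi_mul_abs_sub_pi_le_abs_sin hdist).trans (abs_sin_le_norm_one_add_mul_exp r θ)
    calc ‖1 + (r : ℂ) * exp (θ * I)‖ ^ (-(α * pEx θ))
        = ‖1 + (r : ℂ) * exp (θ * I)‖ ^ (-(2 * α)) := by rw [pEx_eq_two hmid, mul_comm α]
      _ ≤ (2 / Real.pi * |θ - Real.pi|) ^ (-(2 * α)) :=
          Real.rpow_le_rpow_of_nonpos hpos hle (by linarith)
      _ = (2 / Real.pi) ^ (-(2 * α)) * |θ - Real.pi| ^ (-(2 * α)) :=
          Real.mul_rpow (by positivity) (abs_nonneg _)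
      _ ≤ _ := le_add_of_nonneg_left (by norm_num)
  · have hcos := neg_one_half_le_cos_of_notMem_Icc hθ hmid
    have hle : 1 / 2 ≤ ‖1 + (r : ℂ) * exp (θ * I)‖ :=
      le_trans (by nlinarith) (one_add_mul_cos_le_norm_one_add_mul_exp r θ)
    have hexp : α * pEx θ ≤ 2 := by nlinarith [pEx_le_four θ, pEx_nonneg θ]
    calc ‖1 + (r : ℂ) * exp (θ * I)‖ ^ (-(α * pEx θ))
        ≤ (1 / 2 : ℝ) ^ (-(α * pEx θ)) :=
          Real.rpow_le_rpow_of_nonpos (by norm_num) hle (by nlinarith [pEx_nonneg θ])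
      _ ≤ (1 / 2 : ℝ) ^ (-2 : ℝ) :=
          Real.rpow_le_rpow_of_exponent_ge (by norm_num) (by norm_num) (by linarith)
      _ = 4 := by norm_num [Real.rpow_neg, Real.rpow_two]
      _ ≤ _ := le_add_of_nonneg_right (by positivity)

theorem stmt9_general (q ε : ℝ) (hq1 : 2 < q) (hε : 0 < ε)
    (h : 1/q + ε < 1/2) :
    (⨆ r ∈ Set.Ico (0:ℝ) 1,
      ∫⁻ θ in Set.Ioc (0:ℝ) (2*Real.pi),
        ENNReal.ofReal
          ((‖(1 + (r : ℂ) * Complex.exp (θ * Complex.I))‖)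
            ^ (-((1/q + ε) * pEx θ)))) < ⊤ := by
  have hα0 : 0 ≤ 1 / q + ε := by positivity
  have hmajorant : IntegrableOn (fun θ => 4 + (2 / Real.pi) ^ (-(2 * (1 / q + ε)))
      * |θ - Real.pi| ^ (-(2 * (1 / q + ε)))) (Set.Ioc 0 (2 * Real.pi)) :=
    (intervalIntegrable_iff_integrableOn_Ioc_of_le (by positivity)).1 <|
      intervalIntegrable_const.add
        ((intervalIntegrable_abs_sub_rpow (by linarith) _ _ _).const_mul _)
  refine lt_of_le_of_lt (iSup₂_le fun r hr => ?_) hmajorant.setLIntegral_lt_top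
  refine setLIntegral_mono_ae' measurableSet_Ioc ?_
  filter_upwards [Measure.ae_ne volume Real.pi] with θ hθπ hθ
  exact ENNReal.ofReal_le_ofReal <|
    norm_one_add_mul_exp_rpow_le hα0 h.le hr.1 hr.2.le (Set.Ioc_subset_Icc_self hθ) hθπ

/-- for `2 < q ≤ 3` and `ε > 0` with `1/q + ε < 1/2`,
`sup_{0 ≤ r < 1} ∫₀^{2π} |1 + re^{iθ}|^{-(1/q+ε) p(θ)} dθ < ∞`, i.e. the analytic
function `f(z) = (1+z)^{-1/q-ε}` belongs to `H^{p(·)}(𝔻)` for the exponent `pEx`. -/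
theorem stmt9 (q ε : ℝ) (hq1 : 2 < q) (hq2 : q ≤ 3) (hε : 0 < ε)
    (h : 1/q + ε < 1/2) :
    (⨆ r ∈ Set.Ico (0:ℝ) 1,
      ∫⁻ θ in Set.Ioc (0:ℝ) (2*Real.pi),
        ENNReal.ofReal
          ((‖(1 + (r : ℂ) * Complex.exp (θ * Complex.I))‖)
            ^ (-((1/q + ε) * pEx θ)))) < ⊤ :=
  stmt9_general q ε hq1 hε h
end

section
/- Define p : [0,2π] → [2,3] by p(θ) = 3 for θ ∈ [0,π/3] ∪ [5π/3,2π], p(θ) = cos θ + 5/2 for θ ∈ (π/3,2π/3) ∪ (4π/3,5π/3), and p(θ) = 2 for θ ∈ [2π/3,4π/3]. Let 2 < q ≤ 3 and ε > 0 satisfy 1/q + ε < 1/2. Then sup_{0≤r<1} ∫₀^{2π} |1 − re^{iθ}|^{−(1/q+ε)·p(θ)} dθ = ∞; i.e., the analytic function g(z) = (1−z)^{−1/q−ε} does not belong to the variable exponent Hardy space H^{p(·)}(𝔻). -/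
/-!
Near `θ = 0` the exponent is `p = 3`, and `|1 - r e^{iθ}| ≤ (1 - r) + θ`, so the integral
dominates `∫₀¹ (1 - r + θ)^{-3(1/q+ε)} dθ`. Since `3(1/q+ε) ≥ 1`, Fatou's lemma as `r → 1⁻`
bounds the supremum below by `∫₀¹ θ^{-3(1/q+ε)} dθ = ∞`.
-/

open MeasureTheory Complex
open scoped ENNReal

open Filter Set Topology

lemma setLIntegral_Ioc_rpow_eq_top {s c : ℝ} (hs : s ≤ -1) (hc : 0 < c) :
    ∫⁻ x in Ioc 0 c, ENNReal.ofReal (x ^ s) = ⊤ := by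
  by_contra hfin
  have hnonneg : 0 ≤ᵐ[volume.restrict (Ioc 0 c)] fun x : ℝ ↦ x ^ s :=
    (ae_restrict_iff' measurableSet_Ioc).2 (ae_of_all _ fun x hx ↦ Real.rpow_nonneg hx.1.le s)
  have hint : IntegrableOn (fun x : ℝ ↦ x ^ s) (Ioc 0 c) :=
    ⟨(measurable_id.pow_const s).aestronglyMeasurable,
      (hasFiniteIntegral_iff_ofReal hnonneg).2 (lt_top_iff_ne_top.2 hfin)⟩
  have := (intervalIntegral.integrableOn_Ioo_rpow_iff hc).1 (hint.mono_set Ioo_subset_Ioc_self)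
  linarith

lemma liminf_setLIntegral_one_sub_add_rpow_eq_top {s c : ℝ} (hs : s ≤ -1) (hc : 0 < c) :
    liminf (fun r : ℝ ↦ ∫⁻ x in Ioc 0 c, ENNReal.ofReal ((1 - r + x) ^ s)) (𝓝[<] 1) = ⊤ := by
  refine top_unique ?_
  calc ⊤ = ∫⁻ x in Ioc 0 c, ENNReal.ofReal (x ^ s) := (setLIntegral_Ioc_rpow_eq_top hs hc).symm
    _ = ∫⁻ x in Ioc 0 c, liminf (fun r : ℝ ↦ ENNReal.ofReal ((1 - r + x) ^ s)) (𝓝[<] 1) := by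
      refine setLIntegral_congr_fun measurableSet_Ioc fun x hx ↦ (Tendsto.liminf_eq ?_).symm
      have hcont : ContinuousAt (fun r : ℝ ↦ ENNReal.ofReal ((1 - r + x) ^ s)) 1 := by
        refine ENNReal.continuous_ofReal.continuousAt.comp
          (ContinuousAt.rpow_const (by fun_prop) (Or.inl ?_))
        simpa using hx.1.ne'
      simpa using hcont.tendsto.mono_left nhdsWithin_le_nhds
    _ ≤ _ := lintegral_liminf_le fun r ↦ by fun_prop

lemma norm_one_sub_mul_exp_le {r : ℝ} (hr0 : 0 ≤ r) (hr1 : r ≤ 1) (θ : ℝ) :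
    ‖1 - (r : ℂ) * exp (θ * I)‖ ≤ 1 - r + |θ| := by
  have hexp : ‖exp (θ * I) - 1‖ ≤ |θ| := by
    simpa [mul_comm] using Real.norm_exp_I_mul_ofReal_sub_one_le (x := θ)
  calc ‖1 - (r : ℂ) * exp (θ * I)‖ = ‖((1 - r : ℝ) : ℂ) - (r : ℂ) * (exp (θ * I) - 1)‖ := by
        push_cast; ring_nf
    _ ≤ ‖((1 - r : ℝ) : ℂ)‖ + ‖(r : ℂ)‖ * ‖exp (θ * I) - 1‖ := (norm_sub_le _ _).trans_eq
        (by rw [norm_mul])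
    _ ≤ 1 - r + 1 * |θ| := by
      rw [norm_real, norm_real, Real.norm_of_nonneg (by linarith), Real.norm_of_nonneg hr0]
      gcongr
    _ = 1 - r + |θ| := by ring

lemma pEx_eq_three_of_le {θ : ℝ} (hθ : θ ≤ Real.pi / 3) : pEx θ = 3 := if_pos hθ

lemma setLIntegral_one_sub_add_rpow_le {a r : ℝ} (ha : 0 ≤ a) (hr : r ∈ Ico (0 : ℝ) 1) :
    ∫⁻ θ in Ioc (0 : ℝ) 1, ENNReal.ofReal ((1 - r + θ) ^ (-(3 * a))) ≤
      ∫⁻ θ in Ioc 0 (2 * Real.pi),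
        ENNReal.ofReal (‖1 - (r : ℂ) * exp (θ * I)‖ ^ (-(a * pEx θ))) := by
  have hπ := Real.pi_gt_three
  calc _ ≤ ∫⁻ θ in Ioc (0 : ℝ) 1,
        ENNReal.ofReal (‖1 - (r : ℂ) * exp (θ * I)‖ ^ (-(a * pEx θ))) := by
        refine setLIntegral_mono' measurableSet_Ioc fun θ hθ ↦ ENNReal.ofReal_le_ofReal ?_
        rw [pEx_eq_three_of_le (by linarith [hθ.2]), mul_comm a]
        have hpos : 0 < ‖1 - (r : ℂ) * exp (θ * I)‖ := by
          refine norm_pos_iff.2 (sub_ne_zero.2 fun h ↦ ?_)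
          have hnorm := congrArg norm h
          rw [norm_one, norm_mul, norm_exp_ofReal_mul_I, norm_real,
            Real.norm_of_nonneg hr.1] at hnorm
          linarith [hr.2]
        refine Real.rpow_le_rpow_of_nonpos hpos ?_ (by linarith)
        simpa [abs_of_pos hθ.1] using norm_one_sub_mul_exp_le hr.1 hr.2.le θ
    _ ≤ _ := lintegral_mono_set (Ioc_subset_Ioc_right (by linarith))

theorem stmt12_general (q ε : ℝ) (hq1 : 2 < q) (hq2 : q ≤ 3) (hε : 0 < ε) :
    (⨆ r ∈ Set.Ico (0:ℝ) 1,
      ∫⁻ θ in Set.Ioc (0:ℝ) (2*Real.pi),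
        ENNReal.ofReal
          (‖1 - (r : ℂ) * Complex.exp (θ * Complex.I)‖
            ^ (-((1/q + ε) * pEx θ)))) = ⊤ := by
  have ha : 1 / 3 ≤ 1 / q + ε := by
    have : 1 / 3 ≤ 1 / q := one_div_le_one_div_of_le (by linarith) hq2
    linarith
  refine top_unique ?_
  calc ⊤ = liminf (fun r : ℝ ↦ ∫⁻ θ in Ioc 0 1,
        ENNReal.ofReal ((1 - r + θ) ^ (-(3 * (1 / q + ε))))) (𝓝[<] 1) :=
      (liminf_setLIntegral_one_sub_add_rpow_eq_top (by linarith) one_pos).symm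
    _ ≤ _ := liminf_le_of_frequently_le' <| Frequently.mono
      (Eventually.frequently (Ico_mem_nhdsLT one_pos)) fun r hr ↦
        le_iSup₂_of_le r hr (setLIntegral_one_sub_add_rpow_le (by linarith) hr)

/-- for `2 < q ≤ 3` and `ε > 0` with `1/q + ε < 1/2`,
`sup_{0 ≤ r < 1} ∫₀^{2π} |1 - re^{iθ}|^{-(1/q+ε) p(θ)} dθ = ∞`, i.e. the analytic
function `g(z) = (1-z)^{-1/q-ε}` does not belong to `H^{p(·)}(𝔻)` for the exponent
`pEx`. -/
theorem stmt12 (q ε : ℝ) (hq1 : 2 < q) (hq2 : q ≤ 3) (hε : 0 < ε)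
    (h : 1/q + ε < 1/2) :
    (⨆ r ∈ Set.Ico (0:ℝ) 1,
      ∫⁻ θ in Set.Ioc (0:ℝ) (2*Real.pi),
        ENNReal.ofReal
          (‖1 - (r : ℂ) * Complex.exp (θ * Complex.I)‖
            ^ (-((1/q + ε) * pEx θ)))) = ⊤ :=
  stmt12_general q ε hq1 hq2 hε
end
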